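/- Let m ≥ n, let A ∈ ℝ^{m×n} have full rank n, let u, p₁ be positive reals, and let Ṽ ∈ ℝ^{n×n} satisfy ‖ṼᵀṼ − I‖₂ ≤ p₁u < 1. Set Ã = AṼ with columns ã_j (which are nonzero). Then max_{i,j} (|A||Ṽ|)_{ij} / ‖ã_j‖₂ ≤ (1 + p₁u)κ₂(A) / (1 − p₁u). -/

import Mathlib

/-!
By Cauchy–Schwarz, `(|A||Ṽ|)ᵢⱼ ≤ ‖Aᵢ,:‖ ‖ṽⱼ‖ ≤ σ_max(A) ‖ṽⱼ‖`, while
`‖ãⱼ‖ = ‖A ṽⱼ‖ ≥ σ_min(A) ‖ṽⱼ‖`; hence every ratio is at most `κ₂(A)`, which is at most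
`(1 + p₁u) κ₂(A) / (1 - p₁u)` since `0 < p₁u < 1`. Both singular-value bounds come from
expanding `‖Ax‖² = xᵀ(AᵀA)x` in an orthonormal eigenbasis of `AᵀA`, whose eigenvalues are the
squared singular values.
-/

open scoped BigOperators
open Matrix

/-- Euclidean norm of a vector in `ℝ^m`. -/
noncomputable def vecNorm {m : ℕ} (v : Fin m → ℝ) : ℝ :=
  Real.sqrt (∑ i, v i ^ 2)

/-- The `k`-th largest singular value of a real `m × n` matrix
(`k = 0` gives the largest). -/
noncomputable def sval {m n : ℕ} (A : Matrix (Fin m) (Fin n) ℝ) (k : Fin n) : ℝ :=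
  Real.sqrt
    (((by simpa using Matrix.isHermitian_conjTranspose_mul_self A : (Aᵀ * A).IsHermitian).eigenvalues ∘
      Tuple.sort (by simpa using Matrix.isHermitian_conjTranspose_mul_self A : (Aᵀ * A).IsHermitian).eigenvalues) k.rev)

/-- Spectral norm: the largest singular value. -/
noncomputable def specNorm {m n : ℕ} (A : Matrix (Fin m) (Fin n) ℝ) : ℝ :=
  ⨆ k, sval A k

/-- Smallest singular value. -/
noncomputable def sMin {m n : ℕ} (A : Matrix (Fin m) (Fin n) ℝ) : ℝ :=
  ⨅ k, sval A k

/-- Frobenius norm. -/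
noncomputable def frobNorm {m n : ℕ} (A : Matrix (Fin m) (Fin n) ℝ) : ℝ :=
  Real.sqrt (∑ i, ∑ j, (A i j) ^ 2)

/-- Frobenius norm of the off-diagonal part of a square matrix. -/
noncomputable def offF {n : ℕ} (M : Matrix (Fin n) (Fin n) ℝ) : ℝ :=
  frobNorm (M - Matrix.diagonal (fun i => M i i))

/-- Diagonal matrix of inverse column norms `D(A)`. -/
noncomputable def colScale {m n : ℕ} (A : Matrix (Fin m) (Fin n) ℝ) :
    Matrix (Fin n) (Fin n) ℝ :=
  Matrix.diagonal (fun j => (vecNorm (fun i => A i j))⁻¹)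

/-- Condition number `κ₂(A) = σ_max(A) / σ_min(A)`. -/
noncomputable def kappa2 {m n : ℕ} (A : Matrix (Fin m) (Fin n) ℝ) : ℝ :=
  specNorm A / sMin A

/-- One-sided scaled condition number `κ₂ᴰ(A) = κ₂(A · D(A))`. -/
noncomputable def scaledCond {m n : ℕ} (A : Matrix (Fin m) (Fin n) ℝ) : ℝ :=
  kappa2 (A * colScale A)

/-- Entrywise absolute value of a matrix. -/
def matAbs {m n : ℕ} (A : Matrix (Fin m) (Fin n) ℝ) : Matrix (Fin m) (Fin n) ℝ :=
  fun i j => |A i j|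

lemma vecNorm_nonneg {m : ℕ} (v : Fin m → ℝ) : 0 ≤ vecNorm v := Real.sqrt_nonneg _

lemma sq_vecNorm {m : ℕ} (v : Fin m → ℝ) : vecNorm v ^ 2 = ∑ i, v i ^ 2 :=
  Real.sq_sqrt (Finset.sum_nonneg fun _ _ => sq_nonneg _)

lemma abs_le_vecNorm {m : ℕ} (v : Fin m → ℝ) (i : Fin m) : |v i| ≤ vecNorm v :=
  Real.abs_le_sqrt <|
    Finset.single_le_sum (f := fun i => v i ^ 2) (fun _ _ => sq_nonneg _) (Finset.mem_univ i)

lemma matAbs_mul_apply_le {m n p : ℕ} (A : Matrix (Fin m) (Fin n) ℝ)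
    (B : Matrix (Fin n) (Fin p) ℝ) (i : Fin m) (j : Fin p) :
    (matAbs A * matAbs B) i j ≤ vecNorm (fun k => A i k) * vecNorm (fun k => B k j) := by
  simpa only [mul_apply, matAbs, sq_abs, vecNorm] using
    Real.sum_mul_le_sqrt_mul_sqrt Finset.univ (fun k => |A i k|) (fun k => |B k j|)

lemma Matrix.IsHermitian.exists_dotProduct_mulVec_eq_sum {ι : Type*} [Fintype ι] [DecidableEq ι]
    {B : Matrix ι ι ℝ} (hB : B.IsHermitian) (x : ι → ℝ) :
    ∃ y : ι → ℝ, ∑ i, y i ^ 2 = ∑ i, x i ^ 2 ∧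
      x ⬝ᵥ (B *ᵥ x) = ∑ i, hB.eigenvalues i * y i ^ 2 := by
  set U : Matrix ι ι ℝ := (hB.eigenvectorUnitary : Matrix ι ι ℝ)
  have hstar : star U = Uᵀ := by rw [star_eq_conjTranspose, conjTranspose_eq_transpose_of_trivial]
  have hUUt : U * Uᵀ = 1 := hstar ▸ mem_unitaryGroup_iff.mp hB.eigenvectorUnitary.2
  have hB_eq : B = U * diagonal hB.eigenvalues * Uᵀ := hstar ▸ by simpa using hB.spectral_theorem
  refine ⟨Uᵀ *ᵥ x, ?_, ?_⟩
  · have : (Uᵀ *ᵥ x) ⬝ᵥ (Uᵀ *ᵥ x) = x ⬝ᵥ x := by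
      rw [dotProduct_mulVec, vecMul_transpose, mulVec_mulVec, hUUt, one_mulVec]
    simpa [dotProduct, sq] using this
  · conv_lhs => rw [hB_eq, ← mulVec_mulVec, ← mulVec_mulVec, dotProduct_mulVec, ← mulVec_transpose]
    simp only [dotProduct, mulVec_diagonal]
    exact Finset.sum_congr rfl fun i _ => by ring

section SingularValues

variable {m n : ℕ} (A : Matrix (Fin m) (Fin n) ℝ)

lemma sval_nonneg (k : Fin n) : 0 ≤ sval A k := Real.sqrt_nonneg _

lemma specNorm_nonneg : 0 ≤ specNorm A := Real.iSup_nonneg (sval_nonneg A)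

lemma sMin_nonneg : 0 ≤ sMin A := Real.iInf_nonneg (sval_nonneg A)

lemma kappa2_nonneg : 0 ≤ kappa2 A := div_nonneg (specNorm_nonneg A) (sMin_nonneg A)

lemma isHermitian_transpose_mul_self : (Aᵀ * A).IsHermitian := by
  simpa using isHermitian_conjTranspose_mul_self A

variable (hB : (Aᵀ * A).IsHermitian)

lemma eigenvalues_transpose_mul_self_nonneg (i : Fin n) : 0 ≤ hB.eigenvalues i := by
  simpa using (posSemidef_conjTranspose_mul_self A).eigenvalues_nonneg i

lemma exists_sval_eq_sqrt_eigenvalues (i : Fin n) :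
    ∃ k, sval A k = √(hB.eigenvalues i) :=
  ⟨(Tuple.sort hB.eigenvalues).symm i |>.rev, by simp [sval]⟩

lemma eigenvalues_transpose_mul_self_ne_zero (hA : A.rank = n) (i : Fin n) :
    hB.eigenvalues i ≠ 0 := by
  intro hi
  have hlt :=
    Fintype.card_subtype_lt (p := fun j => hB.eigenvalues j ≠ 0) (x := i) (by simpa using hi)
  rw [← hB.rank_eq_card_non_zero_eigs, rank_transpose_mul_self, hA, Fintype.card_fin] at hlt
  exact lt_irrefl _ hlt

lemma eigenvalues_transpose_mul_self_le_sq_specNorm (i : Fin n) :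
    hB.eigenvalues i ≤ specNorm A ^ 2 := by
  obtain ⟨k, hk⟩ := exists_sval_eq_sqrt_eigenvalues A hB i
  have hle : sval A k ≤ specNorm A := le_ciSup (Set.finite_range _).bddAbove k
  rw [← Real.sq_sqrt (eigenvalues_transpose_mul_self_nonneg A hB i), ← hk]
  exact pow_le_pow_left₀ (sval_nonneg A k) hle 2

lemma sq_sMin_le_eigenvalues_transpose_mul_self (i : Fin n) :
    sMin A ^ 2 ≤ hB.eigenvalues i := by
  obtain ⟨k, hk⟩ := exists_sval_eq_sqrt_eigenvalues A hB i
  have hle : sMin A ≤ sval A k := ciInf_le (Set.finite_range _).bddBelow k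
  rw [← Real.sq_sqrt (eigenvalues_transpose_mul_self_nonneg A hB i), ← hk]
  exact pow_le_pow_left₀ (sMin_nonneg A) hle 2

lemma exists_sum_sq_mulVec_eq (x : Fin n → ℝ) :
    ∃ y : Fin n → ℝ, ∑ i, y i ^ 2 = ∑ i, x i ^ 2 ∧
      ∑ i, (A *ᵥ x) i ^ 2 = ∑ i, hB.eigenvalues i * y i ^ 2 := by
  obtain ⟨y, hy, hxBx⟩ := hB.exists_dotProduct_mulVec_eq_sum x
  refine ⟨y, hy, ?_⟩
  rw [← hxBx, ← mulVec_mulVec, dotProduct_mulVec, vecMul_transpose]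
  simp only [dotProduct, sq]

lemma vecNorm_mulVec_le (x : Fin n → ℝ) : vecNorm (A *ᵥ x) ≤ specNorm A * vecNorm x := by
  have hB := isHermitian_transpose_mul_self A
  obtain ⟨y, hy, hAx⟩ := exists_sum_sq_mulVec_eq A hB x
  have hsq : vecNorm (A *ᵥ x) ^ 2 ≤ (specNorm A * vecNorm x) ^ 2 := by
    rw [mul_pow, sq_vecNorm, sq_vecNorm, hAx, ← hy, Finset.mul_sum]
    gcongr with i
    exact eigenvalues_transpose_mul_self_le_sq_specNorm A hB i
  exact (pow_le_pow_iff_left₀ (vecNorm_nonneg _)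
    (mul_nonneg (specNorm_nonneg A) (vecNorm_nonneg x)) two_ne_zero).mp hsq

lemma sMin_mul_vecNorm_le (x : Fin n → ℝ) : sMin A * vecNorm x ≤ vecNorm (A *ᵥ x) := by
  have hB := isHermitian_transpose_mul_self A
  obtain ⟨y, hy, hAx⟩ := exists_sum_sq_mulVec_eq A hB x
  have hsq : (sMin A * vecNorm x) ^ 2 ≤ vecNorm (A *ᵥ x) ^ 2 := by
    rw [mul_pow, sq_vecNorm, sq_vecNorm, hAx, ← hy, Finset.mul_sum]
    gcongr with i
    exact sq_sMin_le_eigenvalues_transpose_mul_self A hB i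
  exact (pow_le_pow_iff_left₀ (mul_nonneg (sMin_nonneg A) (vecNorm_nonneg x))
    (vecNorm_nonneg _) two_ne_zero).mp hsq

lemma sMin_pos [NeZero n] (hA : A.rank = n) : 0 < sMin A := by
  have hB := isHermitian_transpose_mul_self A
  obtain ⟨k, hk⟩ := exists_eq_ciInf_of_finite (f := sval A)
  rw [sMin, ← hk]
  exact Real.sqrt_pos.mpr <| (eigenvalues_transpose_mul_self_nonneg A hB _).lt_of_ne'
    (eigenvalues_transpose_mul_self_ne_zero A hB hA _)

lemma vecNorm_row_le_specNorm (i : Fin m) : vecNorm (fun k => A i k) ≤ specNorm A := by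
  set r : Fin n → ℝ := fun k => A i k
  have hAr : (A *ᵥ r) i = vecNorm r ^ 2 := by
    rw [sq_vecNorm]
    simp only [mulVec, dotProduct, r, sq]
  have hle : vecNorm r ^ 2 ≤ specNorm A * vecNorm r :=
    hAr ▸ (le_abs_self _).trans ((abs_le_vecNorm _ i).trans (vecNorm_mulVec_le A r))
  rcases (vecNorm_nonneg r).eq_or_lt with h0 | hpos
  · rw [← h0]
    exact specNorm_nonneg A
  · exact le_of_mul_le_mul_right (by rwa [← sq]) hpos

theorem matAbs_mul_apply_div_vecNorm_col_le_kappa2 [NeZero n] (hA : A.rank = n) {p : ℕ}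
    (V : Matrix (Fin n) (Fin p) ℝ) (i : Fin m) (j : Fin p) :
    (matAbs A * matAbs V) i j / vecNorm (fun i' => (A * V) i' j) ≤ kappa2 A := by
  set v : Fin n → ℝ := fun k => V k j
  have hκ : kappa2 A * sMin A = specNorm A := div_mul_cancel₀ _ (sMin_pos A hA).ne'
  refine div_le_of_le_mul₀ (vecNorm_nonneg _) (kappa2_nonneg A) ?_
  calc (matAbs A * matAbs V) i j ≤ vecNorm (fun k => A i k) * vecNorm v :=
        matAbs_mul_apply_le A V i j
    _ ≤ specNorm A * vecNorm v :=
        mul_le_mul_of_nonneg_right (vecNorm_row_le_specNorm A i) (vecNorm_nonneg v)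
    _ = kappa2 A * (sMin A * vecNorm v) := by rw [← mul_assoc, hκ]
    _ ≤ kappa2 A * vecNorm (A *ᵥ v) :=
        mul_le_mul_of_nonneg_left (sMin_mul_vecNorm_le A v) (kappa2_nonneg A)
    _ = kappa2 A * vecNorm (fun i' => (A * V) i' j) := rfl

end SingularValues

theorem alpha_bound_general
    {m n : ℕ}
    (A : Matrix (Fin m) (Fin n) ℝ) (hrank : A.rank = n)
    (u p₁ : ℝ) (hu : 0 < u) (hp₁ : 0 < p₁)
    (V : Matrix (Fin n) (Fin n) ℝ)
    (hp₁u : p₁ * u < 1) :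
    ∀ i j, (matAbs A * matAbs V) i j / vecNorm (fun i' => (A * V) i' j) ≤
      (1 + p₁ * u) * kappa2 A / (1 - p₁ * u) := by
  intro i j
  have : NeZero n := NeZero.of_pos j.pos
  have ht : 0 < p₁ * u := mul_pos hp₁ hu
  calc _ ≤ kappa2 A := matAbs_mul_apply_div_vecNorm_col_le_kappa2 A hrank V i j
    _ ≤ (1 + p₁ * u) * kappa2 A / (1 - p₁ * u) := by
      rw [le_div_iff₀ (by linarith)]
      nlinarith [kappa2_nonneg A]

/-- Bound on the quantity `α = max_{i,j} (|A||Ṽ|)_{ij}/‖ã_j‖₂`. -/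
theorem alpha_bound
    {m n : ℕ} (hmn : n ≤ m)
    (A : Matrix (Fin m) (Fin n) ℝ) (hrank : A.rank = n)
    (u p₁ : ℝ) (hu : 0 < u) (hp₁ : 0 < p₁)
    (V : Matrix (Fin n) (Fin n) ℝ)
    (hV : specNorm (Vᵀ * V - 1) ≤ p₁ * u) (hp₁u : p₁ * u < 1) :
    ∀ i j, (matAbs A * matAbs V) i j / vecNorm (fun i' => (A * V) i' j) ≤
      (1 + p₁ * u) * kappa2 A / (1 - p₁ * u) :=
  alpha_bound_general A hrank u p₁ hu hp₁ V hp₁u
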